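/- arXiv:2301.12248 — 2 statements merged into one kernel-verified Lean document; each statement's English description precedes it below -/
import Mathlib

section
/- Let A_D(n) = \sum_{k=0}^{n} \binom{n}{k}^2 \binom{n+k}{k} and let A_D'(n) = 5 \sum_{k=0}^{n} \binom{n}{k}^2 \binom{n+k}{k} (H_n - H_k) where H_m is the m-th harmonic number. Then A_D'(0) = 0 and, for all integers n \ge 1, the rational sequence A_D' satisfies the inhomogeneous recurrence (n+1)^2 A_D'(n+1) = (11 n^2 + 11 n + 3) A_D'(n) + n^2 A_D'(n-1) - 2 (n+1) A_D(n+1) + 11 (2n+1) A_D(n) + 2 n A_D(n-1). -/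
/-- The `m`-th harmonic number. -/
def harm (m : ℕ) : ℚ := ∑ j ∈ Finset.range m, 1 / (j + 1)

/-- Zagier's sporadic sequence D (as rationals). -/
def aperyD (n : ℕ) : ℚ :=
  ∑ k ∈ Finset.range (n + 1), (n.choose k : ℚ) ^ 2 * ((n + k).choose k : ℚ)

/-- The formal derivative of Zagier's sporadic sequence D. -/
def aperyD' (n : ℕ) : ℚ :=
  5 * ∑ k ∈ Finset.range (n + 1),
    (n.choose k : ℚ) ^ 2 * ((n + k).choose k : ℚ) * (harm n - harm k)

def tD (n k : ℕ) : ℚ := (n.choose k : ℚ) ^ 2 * ((n + k).choose k : ℚ)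
def wD (n k : ℕ) : ℚ := harm n - harm k
def pD (x y : ℚ) : ℚ := y ^ 2 + (6 * x + 1) * y - (11 * x + 4) * (x + 1)
def qD (x y : ℚ) : ℚ :=
  -8 * y ^ 3 + (17 * x + 16) * y ^ 2 + (18 * x ^ 2 - 11 * x - 8) * y - 5 * x * (x + 1) * (11 * x + 4)
def gD (n : ℕ) : ℕ → ℚ
  | 0 => 0
  | (j + 1) => pD n (j + 1) * tD n j
def hD (n : ℕ) : ℕ → ℚ
  | 0 => 0
  | (j + 1) => qD n (j + 1) * tD n j / (n * (j + 1))
def GD (n k : ℕ) : ℚ := 5 * wD n k * gD n k + hD n k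

lemma harm_succ (n : ℕ) : harm (n + 1) = harm n + 1 / ((n : ℚ) + 1) := by
  simp [harm, Finset.sum_range_succ]

lemma tD_zero (n : ℕ) : tD n 0 = 1 := by simp [tD]

lemma tD_eq_zero {n k : ℕ} (h : n < k) : tD n k = 0 := by
  simp [tD, Nat.choose_eq_zero_of_lt h]

lemma ch1 (n j : ℕ) (h : j ≤ n) :
    (n.choose (j + 1) : ℚ) * ((j : ℚ) + 1) = (n.choose j : ℚ) * ((n : ℚ) - j) := by
  have h2 : ((n - j : ℕ) : ℚ) = (n : ℚ) - (j : ℚ) := Nat.cast_sub h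
  rw [← h2]
  exact_mod_cast congrArg (Nat.cast (R := ℚ)) (Nat.choose_succ_right_eq n j)

lemma ch2 (n j : ℕ) :
    ((n + 1).choose (j + 1) : ℚ) * ((j : ℚ) + 1) = ((n : ℚ) + 1) * (n.choose j : ℚ) := by
  have := Nat.add_one_mul_choose_eq n j
  exact_mod_cast this.symm

lemma ch3 (n j : ℕ) (h : j ≤ n + 1) :
    ((n + 1).choose j : ℚ) * ((n : ℚ) + 1 - j) = ((n : ℚ) + 1) * (n.choose j : ℚ) := by
  have h2 : ((n + 1 - j : ℕ) : ℚ) = (n : ℚ) + 1 - (j : ℚ) := by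
    push_cast [Nat.cast_sub h]; ring
  rw [← h2]
  have := congrArg (Nat.cast (R := ℚ)) (Nat.choose_mul_succ_eq n j)
  push_cast at this ⊢
  linarith

lemma relA (n j : ℕ) (h : j ≤ n) :
    tD n (j + 1) = ((n : ℚ) - j) ^ 2 * ((n : ℚ) + j + 1) / ((j : ℚ) + 1) ^ 3 * tD n j := by
  have hj : ((j : ℚ) + 1) ≠ 0 := by positivity
  have va : (n.choose (j + 1) : ℚ) = (n.choose j : ℚ) * ((n : ℚ) - j) / ((j : ℚ) + 1) := by
    field_simp
    linarith [ch1 n j h]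
  have vd : (((n + j) + 1).choose (j + 1) : ℚ)
      = ((n : ℚ) + j + 1) * ((n + j).choose j : ℚ) / ((j : ℚ) + 1) := by
    have := ch2 (n + j) j
    push_cast at this
    field_simp
    linarith
  rw [tD, tD, show n + (j + 1) = (n + j) + 1 from rfl, va, vd]
  field_simp

lemma relB (n j : ℕ) :
    tD (n + 1) (j + 1)
      = ((n : ℚ) + 1) * ((n : ℚ) + j + 1) * ((n : ℚ) + j + 2) / ((j : ℚ) + 1) ^ 3 * tD n j := by
  have hj : ((j : ℚ) + 1) ≠ 0 := by positivity
  have hn : ((n : ℚ) + 1) ≠ 0 := by positivity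
  have va : ((n + 1).choose (j + 1) : ℚ) = ((n : ℚ) + 1) * (n.choose j : ℚ) / ((j : ℚ) + 1) := by
    field_simp
    linarith [ch2 n j]
  have vd : (((n + j + 1) + 1).choose (j + 1) : ℚ)
      = ((n : ℚ) + j + 2) * ((n + j + 1).choose j : ℚ) / ((j : ℚ) + 1) := by
    have := ch2 (n + j + 1) j
    push_cast at this
    field_simp
    linarith
  have ve : ((n + j + 1).choose j : ℚ)
      = ((n : ℚ) + j + 1) * ((n + j).choose j : ℚ) / ((n : ℚ) + 1) := by
    have := ch3 (n + j) j (by omega)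
    push_cast at this
    have h2 : ((n : ℚ) + j + 1 - j) = (n : ℚ) + 1 := by ring
    field_simp
    nlinarith [this]
  rw [tD, tD, show (n + 1) + (j + 1) = (n + j + 1) + 1 from by omega, va, vd, ve]
  field_simp

lemma relC (m j : ℕ) (h : j ≤ m) :
    tD m (j + 1)
      = ((m : ℚ) + 1 - j) ^ 2 * ((m : ℚ) - j) ^ 2 / (((m : ℚ) + 1) * ((j : ℚ) + 1) ^ 3)
        * tD (m + 1) j := by
  have hj : ((j : ℚ) + 1) ≠ 0 := by positivity
  have hm : ((m : ℚ) + 1) ≠ 0 := by positivity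
  have hmj : ((m : ℚ) + (j : ℚ) + 1) ≠ 0 := by positivity
  have va : (m.choose (j + 1) : ℚ) = (m.choose j : ℚ) * ((m : ℚ) - j) / ((j : ℚ) + 1) := by
    field_simp
    linarith [ch1 m j h]
  have vb : (m.choose j : ℚ) = ((m + 1).choose j : ℚ) * ((m : ℚ) + 1 - j) / ((m : ℚ) + 1) := by
    have := ch3 m j (by omega)
    field_simp
    linarith
  have vB : (((m + j) + 1).choose (j + 1) : ℚ)
      = ((m : ℚ) + j + 1) * ((m + j).choose j : ℚ) / ((j : ℚ) + 1) := by
    have := ch2 (m + j) j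
    push_cast at this
    field_simp
    linarith
  have vE : ((m + j).choose j : ℚ)
      = ((m + 1 + j).choose j : ℚ) * ((m : ℚ) + 1) / ((m : ℚ) + j + 1) := by
    have := ch3 (m + j) j (by omega)
    push_cast at this
    rw [show (m + j) + 1 = m + 1 + j from by omega] at this
    field_simp
    nlinarith [this]
  rw [tD, tD, show m + (j + 1) = (m + j) + 1 from rfl, va, vb, vB, vE]
  field_simp

set_option maxHeartbeats 1000000 in
lemma lemA (m j : ℕ) (hjm : j ≤ m) :
    ((m : ℚ) + 2) ^ 2 * tD (m + 1 + 1) (j + 1)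
      - (11 * ((m : ℚ) + 1) ^ 2 + 11 * ((m : ℚ) + 1) + 3) * tD (m + 1) (j + 1)
      - ((m : ℚ) + 1) ^ 2 * tD m (j + 1)
    = gD (m + 1) (j + 1 + 1) - gD (m + 1) (j + 1) := by
  have E1 := relA (m + 1) j (by omega)
  have E2 := relB (m + 1) j
  have E3 := relC m j hjm
  push_cast at E1 E2 E3
  simp only [gD, pD]
  rw [E1, E2, E3]
  have h1 : ((j : ℚ) + 1) ≠ 0 := by positivity
  have h2 : ((m : ℚ) + 1) ≠ 0 := by positivity
  push_cast
  field_simp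
  ring

set_option maxHeartbeats 1000000 in
lemma lemB (m j : ℕ) (hjm : j ≤ m) :
    5 * ((m : ℚ) + 2) ^ 2 * tD (m + 1 + 1) (j + 1) * (1 / ((m : ℚ) + 2))
      + 5 * ((m : ℚ) + 1) ^ 2 * tD m (j + 1) * (1 / ((m : ℚ) + 1))
      + 2 * ((m : ℚ) + 2) * tD (m + 1 + 1) (j + 1)
      - 11 * (2 * ((m : ℚ) + 1) + 1) * tD (m + 1) (j + 1)
      - 2 * ((m : ℚ) + 1) * tD m (j + 1)
      + 5 * (1 / ((j : ℚ) + 1 + 1)) * gD (m + 1) (j + 1 + 1)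
    = hD (m + 1) (j + 1 + 1) - hD (m + 1) (j + 1) := by
  have E1 := relA (m + 1) j (by omega)
  have E2 := relB (m + 1) j
  have E3 := relC m j hjm
  push_cast at E1 E2 E3
  simp only [gD, hD, pD, qD]
  rw [E1, E2, E3]
  have h1 : ((j : ℚ) + 1) ≠ 0 := by positivity
  have h2 : ((m : ℚ) + 1) ≠ 0 := by positivity
  have h3 : ((m : ℚ) + 2) ≠ 0 := by positivity
  have h4 : ((j : ℚ) + 2) ≠ 0 := by positivity
  push_cast
  field_simp
  ring

set_option maxHeartbeats 1000000 in
lemma keyD (m : ℕ) : ∀ k, k ≤ m + 2 →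
    5 * ((m : ℚ) + 2) ^ 2 * (tD (m + 1 + 1) k * wD (m + 1 + 1) k)
      - 5 * (11 * ((m : ℚ) + 1) ^ 2 + 11 * ((m : ℚ) + 1) + 3) * (tD (m + 1) k * wD (m + 1) k)
      - 5 * ((m : ℚ) + 1) ^ 2 * (tD m k * wD m k)
      + 2 * ((m : ℚ) + 2) * tD (m + 1 + 1) k
      - 11 * (2 * ((m : ℚ) + 1) + 1) * tD (m + 1) k
      - 2 * ((m : ℚ) + 1) * tD m k
    = GD (m + 1) (k + 1) - GD (m + 1) k := by
  have hm1 : ((m : ℚ) + 1) ≠ 0 := by positivity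
  have hm2 : ((m : ℚ) + 2) ≠ 0 := by positivity
  intro k hk
  match k with
  | 0 =>
    simp only [GD, gD, hD, wD, pD, qD, tD_zero]
    rw [harm_succ (m + 1), harm_succ m, harm_succ 0]
    simp only [harm, Finset.range_zero, Finset.sum_empty]
    push_cast
    field_simp
    ring
  | (j + 1) =>
    by_cases hjm : j ≤ m
    · have hA := lemA m j hjm
      have hB := lemB m j hjm
      simp only [GD, wD]
      rw [harm_succ (m + 1), harm_succ m, harm_succ (j + 1), harm_succ j]
      push_cast
      push_cast at hA hB
      linear_combination
        (5 * (harm m + 1 / ((m : ℚ) + 1) - (harm j + 1 / ((j : ℚ) + 1)))) * hA + hB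
    · have hj : j = m + 1 := by omega
      subst hj
      have t1 : tD (m + 1) (m + 1 + 1) = 0 := tD_eq_zero (by omega)
      have t2 : tD m (m + 1 + 1) = 0 := tD_eq_zero (by omega)
      have hc : ((m : ℚ) + 2) * tD (m + 1 + 1) (m + 1 + 1)
          = 2 * (2 * (m : ℚ) + 3) * tD (m + 1) (m + 1) := by
        have h0 := Nat.succ_mul_centralBinom_succ (m + 1)
        unfold Nat.centralBinom at h0
        have e1 : tD (m + 1 + 1) (m + 1 + 1) = ((2 * (m + 2)).choose (m + 2) : ℚ) := by
          rw [tD, show (m + 1 + 1) + (m + 1 + 1) = 2 * (m + 2) from by omega]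
          simp [Nat.choose_self]
        have e2 : tD (m + 1) (m + 1) = ((2 * (m + 1)).choose (m + 1) : ℚ) := by
          rw [tD, show (m + 1) + (m + 1) = 2 * (m + 1) from by omega]
          simp [Nat.choose_self]
        rw [e1, e2]
        have := congrArg (Nat.cast (R := ℚ)) h0
        push_cast at this
        linarith
      have E : tD (m + 1 + 1) (m + 1 + 1)
          = 2 * (2 * (m : ℚ) + 3) / ((m : ℚ) + 2) * tD (m + 1) (m + 1) := by
        field_simp
        linarith [hc]
      simp only [GD, gD, hD, wD, pD, qD, t1, t2]
      rw [E]
      rw [harm_succ (m + 1), harm_succ m]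
      push_cast
      field_simp
      ring
lemma sum_ext (f : ℕ → ℚ) {n N : ℕ} (h : n + 1 ≤ N) (hz : ∀ k, n < k → f k = 0) :
    ∑ k ∈ Finset.range N, f k = ∑ k ∈ Finset.range (n + 1), f k := by
  refine (Finset.sum_subset ?_ ?_).symm
  · intro x hx
    simp only [Finset.mem_range] at *
    omega
  · intro x hx hnx
    simp only [Finset.mem_range] at hx hnx
    exact hz x (by omega)

theorem aperyD'_recurrence :
    aperyD' 0 = 0 ∧
      ∀ n : ℕ, 1 ≤ n →
        ((n : ℚ) + 1) ^ 2 * aperyD' (n + 1) =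
          (11 * (n : ℚ) ^ 2 + 11 * n + 3) * aperyD' n + (n : ℚ) ^ 2 * aperyD' (n - 1)
            - 2 * ((n : ℚ) + 1) * aperyD (n + 1) + 11 * (2 * (n : ℚ) + 1) * aperyD n
            + 2 * (n : ℚ) * aperyD (n - 1) := by
  constructor
  · norm_num [aperyD']
  · intro n hn
    obtain ⟨m, rfl⟩ : ∃ m, n = m + 1 := ⟨n - 1, by omega⟩
    simp only [Nat.add_sub_cancel]
    have hsum : ∑ k ∈ Finset.range (m + 1 + 2), (GD (m + 1) (k + 1) - GD (m + 1) k) = 0 := by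
      rw [Finset.sum_range_sub]
      have g0 : GD (m + 1) 0 = 0 := by simp [GD, gD, hD]
      have t0 : tD (m + 1) (m + 1 + 1) = 0 := tD_eq_zero (by omega)
      have gN : GD (m + 1) (m + 1 + 2) = 0 := by
        show GD (m + 1) (m + 1 + 1 + 1) = 0
        simp [GD, gD, hD, t0]
      rw [g0, gN]
      ring
    have htele : ∑ k ∈ Finset.range (m + 1 + 2),
        (5 * ((m : ℚ) + 2) ^ 2 * (tD (m + 1 + 1) k * wD (m + 1 + 1) k)
          - 5 * (11 * ((m : ℚ) + 1) ^ 2 + 11 * ((m : ℚ) + 1) + 3)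
              * (tD (m + 1) k * wD (m + 1) k)
          - 5 * ((m : ℚ) + 1) ^ 2 * (tD m k * wD m k)
          + 2 * ((m : ℚ) + 2) * tD (m + 1 + 1) k
          - 11 * (2 * ((m : ℚ) + 1) + 1) * tD (m + 1) k
          - 2 * ((m : ℚ) + 1) * tD m k) = 0 := by
      rw [Finset.sum_congr rfl fun k hk =>
        keyD m k (by simpa [Nat.lt_succ_iff] using Finset.mem_range.mp hk)]
      exact hsum
    simp only [Finset.sum_sub_distrib, Finset.sum_add_distrib, ← Finset.mul_sum] at htele
    have ex1 : ∑ k ∈ Finset.range (m + 1 + 2), tD (m + 1) k * wD (m + 1) k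
        = ∑ k ∈ Finset.range (m + 1 + 1), tD (m + 1) k * wD (m + 1) k :=
      sum_ext _ (by omega) fun k hk => by rw [tD_eq_zero hk, zero_mul]
    have ex2 : ∑ k ∈ Finset.range (m + 1 + 2), tD m k * wD m k
        = ∑ k ∈ Finset.range (m + 1), tD m k * wD m k :=
      sum_ext _ (by omega) fun k hk => by rw [tD_eq_zero hk, zero_mul]
    have ex3 : ∑ k ∈ Finset.range (m + 1 + 2), tD (m + 1) k
        = ∑ k ∈ Finset.range (m + 1 + 1), tD (m + 1) k :=
      sum_ext _ (by omega) fun k hk => tD_eq_zero hk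
    have ex4 : ∑ k ∈ Finset.range (m + 1 + 2), tD m k
        = ∑ k ∈ Finset.range (m + 1), tD m k :=
      sum_ext _ (by omega) fun k hk => tD_eq_zero hk
    rw [ex1, ex2, ex3, ex4] at htele
    have d2 : aperyD' (m + 1 + 1)
        = 5 * ∑ k ∈ Finset.range (m + 1 + 2), tD (m + 1 + 1) k * wD (m + 1 + 1) k := rfl
    have d1 : aperyD' (m + 1)
        = 5 * ∑ k ∈ Finset.range (m + 1 + 1), tD (m + 1) k * wD (m + 1) k := rfl
    have d0 : aperyD' m = 5 * ∑ k ∈ Finset.range (m + 1), tD m k * wD m k := rfl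
    have a2 : aperyD (m + 1 + 1) = ∑ k ∈ Finset.range (m + 1 + 2), tD (m + 1 + 1) k := rfl
    have a1 : aperyD (m + 1) = ∑ k ∈ Finset.range (m + 1 + 1), tD (m + 1) k := rfl
    have a0 : aperyD m = ∑ k ∈ Finset.range (m + 1), tD m k := rfl
    rw [d2, d1, d0, a2, a1, a0]
    push_cast
    linear_combination htele
end

section
/- Let A(n) = \sum_{k=0}^{n} \binom{n}{k}^2 \binom{n+k}{k}^2 and let A'(n) = 2 \sum_{k=0}^{n} \binom{n}{k}^2 \binom{n+k}{k}^2 (H_{n+k} - H_{n-k}) where H_m is the m-th harmonic number. Then A'(0) = 0 and, for all integers n \ge 1, the rational sequence A' satisfies the inhomogeneous recurrence (n+1)^3 A'(n+1) = (2n+1)(17 n^2 + 17 n + 5) A'(n) - n^3 A'(n-1) - 3 (n+1)^2 A(n+1) + (102 n^2 + 102 n + 27) A(n) - 3 n^2 A(n-1). -/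
/-- The Apéry numbers (as rationals). -/
def apery (n : ℕ) : ℚ :=
  ∑ k ∈ Finset.range (n + 1), (n.choose k : ℚ) ^ 2 * ((n + k).choose k : ℚ) ^ 2

/-- The formal derivative of the Apéry numbers. -/
def apery' (n : ℕ) : ℚ :=
  2 * ∑ k ∈ Finset.range (n + 1),
    (n.choose k : ℚ) ^ 2 * ((n + k).choose k : ℚ) ^ 2 * (harm (n + k) - harm (n - k))

namespace AperyAux

def f (n k : ℕ) : ℚ := (n.choose k : ℚ) ^ 2 * ((n + k).choose k : ℚ) ^ 2

def s (n k : ℕ) : ℚ := f n k * (harm (n + k) - harm (n - k))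

/-- the telescoping certificate sequence (derivative of the Zeilberger certificate) -/
def g (n k : ℕ) : ℚ :=
  f n k * (2 * (harm (n + k) - harm (n - k)) *
      (4 * (k : ℚ) ^ 4 * (2 * (n : ℚ) + 1) * (2 * (k : ℚ) ^ 2 - 3 * k - 4 * (n : ℚ) ^ 2 - 4 * n) /
        (((n : ℚ) - k + 1) ^ 2 * ((n : ℚ) + k) ^ 2))
    + (8 * (k : ℚ) ^ 4 * (2 * (k : ℚ) ^ 2 - 3 * k - 12 * (n : ℚ) ^ 2 - 12 * n - 2) *
          ((n : ℚ) - k + 1) * ((n : ℚ) + k)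
        - 8 * (k : ℚ) ^ 4 * (2 * (n : ℚ) + 1) ^ 2 *
          (2 * (k : ℚ) ^ 2 - 3 * k - 4 * (n : ℚ) ^ 2 - 4 * n)) /
      (((n : ℚ) - k + 1) ^ 3 * ((n : ℚ) + k) ^ 3))

/-- the linear form whose sum over `k` must vanish -/
def L (n k : ℕ) : ℚ :=
  ((n : ℚ) + 1) ^ 3 * (2 * s (n + 1) k)
    - (2 * (n : ℚ) + 1) * (17 * (n : ℚ) ^ 2 + 17 * n + 5) * (2 * s n k)
    + (n : ℚ) ^ 3 * (2 * s (n - 1) k)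
    + 3 * ((n : ℚ) + 1) ^ 2 * f (n + 1) k
    - (102 * (n : ℚ) ^ 2 + 102 * n + 27) * f n k
    + 3 * (n : ℚ) ^ 2 * f (n - 1) k

lemma harm_succ (m : ℕ) : harm (m + 1) = harm m + 1 / ((m : ℚ) + 1) := by
  simp [harm, Finset.sum_range_succ]

lemma harm_zero : harm 0 = 0 := by simp [harm]

lemma harm_one : harm 1 = 1 := by simp [harm, Finset.sum_range_succ]

lemma chooseA (n k : ℕ) (hk : k ≤ n + 1) :
    ((n + 1).choose k : ℚ) * ((n : ℚ) - k + 1) = (n.choose k : ℚ) * ((n : ℚ) + 1) := by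
  have h1 := Nat.add_one_mul_choose_eq n k
  have h2 := Nat.choose_succ_right_eq (n + 1) k
  have h1' : (n + 1) * n.choose k = (n + 1).choose (k + 1) * (k + 1) := h1
  have h3 : (n + 1).choose k * (n + 1 - k) = n.choose k * (n + 1) := by
    rw [← h2, ← h1']; ring
  have h4 : ((n + 1 - k : ℕ) : ℚ) = (n : ℚ) - k + 1 := by
    rw [Nat.cast_sub hk]; push_cast; ring
  calc ((n + 1).choose k : ℚ) * ((n : ℚ) - k + 1)
      = (((n + 1).choose k * (n + 1 - k) : ℕ) : ℚ) := by rw [← h4]; push_cast; ring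
    _ = ((n.choose k * (n + 1) : ℕ) : ℚ) := by rw [h3]
    _ = (n.choose k : ℚ) * ((n : ℚ) + 1) := by push_cast; ring

lemma chooseB (n k : ℕ) (hk : k ≤ n) :
    (n.choose (k + 1) : ℚ) * ((k : ℚ) + 1) = (n.choose k : ℚ) * ((n : ℚ) - k) := by
  have h1 := Nat.choose_succ_right_eq n k
  have h4 : ((n - k : ℕ) : ℚ) = (n : ℚ) - k := by rw [Nat.cast_sub hk]
  calc (n.choose (k + 1) : ℚ) * ((k : ℚ) + 1)
      = ((n.choose (k + 1) * (k + 1) : ℕ) : ℚ) := by push_cast; ring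
    _ = ((n.choose k * (n - k) : ℕ) : ℚ) := by rw [h1]
    _ = (n.choose k : ℚ) * ((n : ℚ) - k) := by rw [Nat.cast_mul, h4]

lemma chooseC (n k : ℕ) :
    (((n + k + 1).choose (k + 1)) : ℚ) * ((k : ℚ) + 1)
      = ((n + k).choose k : ℚ) * ((n : ℚ) + k + 1) := by
  have h1 := Nat.add_one_mul_choose_eq (n + k) k
  calc (((n + k + 1).choose (k + 1)) : ℚ) * ((k : ℚ) + 1)
      = (((n + k + 1).choose (k + 1) * (k + 1) : ℕ) : ℚ) := by push_cast; ring
    _ = (((n + k + 1) * (n + k).choose k : ℕ) : ℚ) := by rw [← h1]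
    _ = ((n + k).choose k : ℚ) * ((n : ℚ) + k + 1) := by push_cast; ring

lemma f_up (n k : ℕ) (hk : k ≤ n) :
    f (n + 1) k = f n k * (((n : ℚ) + k + 1) / ((n : ℚ) - k + 1)) ^ 2 := by
  have hky : (k : ℚ) ≤ n := by exact_mod_cast hk
  have hk0 : (0 : ℚ) ≤ k := by positivity
  have hne : (n : ℚ) - k + 1 ≠ 0 := ne_of_gt (by linarith)
  have hne1 : (n : ℚ) + 1 ≠ 0 := ne_of_gt (by linarith)
  have e1 : ((n + 1).choose k : ℚ) = (n.choose k : ℚ) * ((n : ℚ) + 1) / ((n : ℚ) - k + 1) :=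
    eq_div_of_mul_eq hne (chooseA n k (by omega))
  have e2 : ((n + 1 + k).choose k : ℚ)
      = ((n + k).choose k : ℚ) * ((n : ℚ) + k + 1) / ((n : ℚ) + 1) := by
    have hx : n + 1 + k = n + k + 1 := by omega
    rw [hx]
    apply eq_div_of_mul_eq hne1
    have h := chooseA (n + k) k (by omega)
    push_cast at h ⊢
    linear_combination h
  simp only [f, e1, e2]
  field_simp

lemma f_down (n k : ℕ) (hk : k + 1 ≤ n) :
    f (n - 1) k = f n k * (((n : ℚ) - k) / ((n : ℚ) + k)) ^ 2 := by
  obtain ⟨m, rfl⟩ : ∃ m, n = m + 1 := ⟨n - 1, by omega⟩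
  simp only [Nat.add_sub_cancel]
  have hky : (k : ℚ) + 1 ≤ (m : ℚ) + 1 := by exact_mod_cast hk
  have hk0 : (0 : ℚ) ≤ k := by positivity
  have d1 : (m : ℚ) - k + 1 ≠ 0 := ne_of_gt (by linarith)
  have d2 : (m : ℚ) + k + 1 ≠ 0 := ne_of_gt (by linarith)
  rw [f_up m k (by omega)]
  push_cast
  have d3 : (m : ℚ) + 1 - k ≠ 0 := ne_of_gt (by linarith)
  have d4 : (m : ℚ) + 1 + k ≠ 0 := ne_of_gt (by linarith)
  field_simp
  ring

lemma f_right (n k : ℕ) (hk : k ≤ n) :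
    f n (k + 1) = f n k * (((n : ℚ) - k) * ((n : ℚ) + k + 1) / ((k : ℚ) + 1) ^ 2) ^ 2 := by
  have hne : ((k : ℚ) + 1) ≠ 0 := by positivity
  have e3 : (n.choose (k + 1) : ℚ) = (n.choose k : ℚ) * ((n : ℚ) - k) / ((k : ℚ) + 1) :=
    eq_div_of_mul_eq hne (chooseB n k hk)
  have e4 : ((n + (k + 1)).choose (k + 1) : ℚ)
      = ((n + k).choose k : ℚ) * ((n : ℚ) + k + 1) / ((k : ℚ) + 1) := by
    have hx : n + (k + 1) = n + k + 1 := by omega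
    rw [hx]
    exact eq_div_of_mul_eq hne (chooseC n k)
  simp only [f, e3, e4]
  field_simp

lemma harm_shift1 (n k : ℕ) : harm (n + 1 + k) = harm (n + k) + 1 / ((n : ℚ) + k + 1) := by
  have h : n + 1 + k = (n + k) + 1 := by omega
  rw [h, harm_succ]; push_cast; ring

lemma harm_shift2 (n k : ℕ) (hk : k ≤ n) :
    harm (n + 1 - k) = harm (n - k) + 1 / ((n : ℚ) - k + 1) := by
  have h : n + 1 - k = (n - k) + 1 := by omega
  rw [h, harm_succ, Nat.cast_sub hk]

lemma harm_shift3 (n k : ℕ) (hn : 1 ≤ n) :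
    harm (n - 1 + k) = harm (n + k) - 1 / ((n : ℚ) + k) := by
  have h : n + k = (n - 1 + k) + 1 := by omega
  have hc : ((n - 1 + k : ℕ) : ℚ) = (n : ℚ) + k - 1 := by
    have h2 : n - 1 + k = n + k - 1 := by omega
    rw [h2, Nat.cast_sub (by omega : 1 ≤ n + k)]; push_cast; ring
  rw [h, harm_succ, hc]; ring

lemma harm_shift4 (n k : ℕ) (hk : k + 1 ≤ n) :
    harm (n - 1 - k) = harm (n - k) - 1 / ((n : ℚ) - k) := by
  have h : n - k = (n - 1 - k) + 1 := by omega
  have hc : ((n - 1 - k : ℕ) : ℚ) = (n : ℚ) - k - 1 := by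
    have h2 : n - 1 - k = n - (k + 1) := by omega
    rw [h2, Nat.cast_sub hk]; push_cast; ring
  rw [h, harm_succ, hc]; ring

lemma harm_shift5 (n k : ℕ) : harm (n + (k + 1)) = harm (n + k) + 1 / ((n : ℚ) + k + 1) := by
  have h : n + (k + 1) = (n + k) + 1 := by omega
  rw [h, harm_succ]; push_cast; ring

lemma harm_shift6 (n k : ℕ) (hk : k + 1 ≤ n) :
    harm (n - (k + 1)) = harm (n - k) - 1 / ((n : ℚ) - k) := by
  have h : n - k = (n - (k + 1)) + 1 := by omega
  have hc : ((n - (k + 1) : ℕ) : ℚ) = (n : ℚ) - k - 1 := by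
    rw [Nat.cast_sub hk]; push_cast; ring
  rw [h, harm_succ, hc]; ring


set_option maxHeartbeats 2000000 in
lemma g_succ (n k : ℕ) (hk : k + 1 ≤ n) :
    g n (k + 1) = f n k *
      ((((n : ℚ) - k) * ((n : ℚ) + k + 1) / ((k : ℚ) + 1) ^ 2) ^ 2 *
        (2 * (harm (n + k) - harm (n - k) + 1 / ((n : ℚ) + k + 1) + 1 / ((n : ℚ) - k)) *
          (4 * ((k : ℚ) + 1) ^ 4 * (2 * (n : ℚ) + 1) *
              (2 * (k : ℚ) ^ 2 + k - 1 - 4 * (n : ℚ) ^ 2 - 4 * n) /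
            (((n : ℚ) - k) ^ 2 * ((n : ℚ) + k + 1) ^ 2))
        + (8 * ((k : ℚ) + 1) ^ 4 * (2 * (k : ℚ) ^ 2 + k - 12 * (n : ℚ) ^ 2 - 12 * n - 3) *
              ((n : ℚ) - k) * ((n : ℚ) + k + 1)
            - 8 * ((k : ℚ) + 1) ^ 4 * (2 * (n : ℚ) + 1) ^ 2 *
              (2 * (k : ℚ) ^ 2 + k - 1 - 4 * (n : ℚ) ^ 2 - 4 * n)) /
          (((n : ℚ) - k) ^ 3 * ((n : ℚ) + k + 1) ^ 3))) := by
  have hky : (k : ℚ) + 1 ≤ (n : ℚ) := by exact_mod_cast hk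
  have hk0 : (0 : ℚ) ≤ k := by positivity
  simp only [g]
  rw [f_right n k (by omega), harm_shift5, harm_shift6 n k hk]
  push_cast
  have d1 : (n : ℚ) - k ≠ 0 := ne_of_gt (by linarith)
  have d2 : (n : ℚ) + k + 1 ≠ 0 := ne_of_gt (by linarith)
  have d3 : ((k : ℚ) + 1) ≠ 0 := by positivity
  have d4 : (n : ℚ) - (k + 1) + 1 ≠ 0 := by intro h; apply d1; linarith
  have d5 : (n : ℚ) + (k + 1) ≠ 0 := by intro h; apply d2; linarith
  rw [show ((n:ℚ) - ((k:ℚ) + 1) + 1 : ℚ) = (n:ℚ) - (k:ℚ) from by ring,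
      show ((n:ℚ) + ((k:ℚ) + 1) : ℚ) = (n:ℚ) + (k:ℚ) + 1 from by ring]
  ring



lemma g_succ' (n k : ℕ) (hk : k + 1 ≤ n) :
    g n (k + 1) = f n k *
      (2 * (harm (n + k) - harm (n - k) + 1 / ((n : ℚ) + k + 1) + 1 / ((n : ℚ) - k)) *
          (4 * (2 * (n : ℚ) + 1) * (2 * (k : ℚ) ^ 2 + k - 1 - 4 * (n : ℚ) ^ 2 - 4 * n))
        + 8 * ((2 * (k : ℚ) ^ 2 + k - 12 * (n : ℚ) ^ 2 - 12 * n - 3) * ((n : ℚ) - k) *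
              ((n : ℚ) + k + 1)
            - (2 * (n : ℚ) + 1) ^ 2 * (2 * (k : ℚ) ^ 2 + k - 1 - 4 * (n : ℚ) ^ 2 - 4 * n)) /
          (((n : ℚ) - k) * ((n : ℚ) + k + 1))) := by
  have hky : (k : ℚ) + 1 ≤ (n : ℚ) := by exact_mod_cast hk
  have hk0 : (0 : ℚ) ≤ k := by positivity
  rw [g_succ n k hk]
  have d1 : (n : ℚ) - k ≠ 0 := ne_of_gt (by linarith)
  have d2 : (n : ℚ) + k + 1 ≠ 0 := ne_of_gt (by linarith)
  have d3 : ((k : ℚ) + 1) ≠ 0 := by positivity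
  field_simp


set_option maxHeartbeats 1000000 in
lemma stepH (x y F : ℚ) (d1 : x - y + 1 ≠ 0) (d2 : x + y ≠ 0) :
    2 * (x + 1) ^ 3 * F * ((x + y + 1) / (x - y + 1)) ^ 2
      - 2 * (2 * x + 1) * (17 * x ^ 2 + 17 * x + 5) * F
      + 2 * x ^ 3 * F * ((x - y) / (x + y)) ^ 2
    = 2 * F * (4 * (2 * x + 1) * (2 * y ^ 2 + y - 1 - 4 * x ^ 2 - 4 * x))
      - 2 * F * (4 * y ^ 4 * (2 * x + 1) * (2 * y ^ 2 - 3 * y - 4 * x ^ 2 - 4 * x) /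
          ((x - y + 1) ^ 2 * (x + y) ^ 2)) := by
  field_simp
  ring

set_option maxHeartbeats 4000000 in
lemma stepC (x y F : ℚ) (d1 : x - y + 1 ≠ 0) (d2 : x + y ≠ 0) (d3 : x - y ≠ 0)
    (d4 : x + y + 1 ≠ 0) :
    (x + 1) ^ 3 * (2 * F * ((x + y + 1) / (x - y + 1)) ^ 2 * (1 / (x + y + 1) - 1 / (x - y + 1)))
      + x ^ 3 * (2 * F * ((x - y) / (x + y)) ^ 2 * (1 / (x - y) - 1 / (x + y)))
      + 3 * (x + 1) ^ 2 * (F * ((x + y + 1) / (x - y + 1)) ^ 2)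
      - (102 * x ^ 2 + 102 * x + 27) * F
      + 3 * x ^ 2 * (F * ((x - y) / (x + y)) ^ 2)
    = 2 * F * (1 / (x + y + 1) + 1 / (x - y)) * (4 * (2 * x + 1) * (2 * y ^ 2 + y - 1 - 4 * x ^ 2 - 4 * x))
      + F * (8 * ((2 * y ^ 2 + y - 12 * x ^ 2 - 12 * x - 3) * (x - y) * (x + y + 1)
            - (2 * x + 1) ^ 2 * (2 * y ^ 2 + y - 1 - 4 * x ^ 2 - 4 * x)) /
          ((x - y) * (x + y + 1)))
      - F * ((8 * y ^ 4 * (2 * y ^ 2 - 3 * y - 12 * x ^ 2 - 12 * x - 2) * (x - y + 1) * (x + y)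
            - 8 * y ^ 4 * (2 * x + 1) ^ 2 * (2 * y ^ 2 - 3 * y - 4 * x ^ 2 - 4 * x)) /
          ((x - y + 1) ^ 3 * (x + y) ^ 3)) := by
  field_simp
  ring

set_option maxHeartbeats 1000000 in
lemma step (n k : ℕ) (hk : k + 1 ≤ n) : L n k = g n (k + 1) - g n k := by
  have hky : (k : ℚ) + 1 ≤ (n : ℚ) := by exact_mod_cast hk
  have hk0 : (0 : ℚ) ≤ k := by positivity
  have d1 : (n : ℚ) - k + 1 ≠ 0 := ne_of_gt (by linarith)
  have d2 : (n : ℚ) + k ≠ 0 := ne_of_gt (by linarith)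
  have d3 : (n : ℚ) - k ≠ 0 := ne_of_gt (by linarith)
  have d4 : (n : ℚ) + k + 1 ≠ 0 := ne_of_gt (by linarith)
  simp only [L, s]
  rw [f_up n k (by omega), f_down n k hk, harm_shift1, harm_shift2 n k (by omega),
      harm_shift3 n k (by omega), harm_shift4 n k hk, g_succ' n k hk]
  simp only [g]
  linear_combination (harm (n + k) - harm (n - k)) * stepH (n : ℚ) (k : ℚ) (f n k) d1 d2
    + stepC (n : ℚ) (k : ℚ) (f n k) d1 d2 d3 d4

lemma g_zero (n : ℕ) : g n 0 = 0 := by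
  norm_num [g]

set_option maxHeartbeats 1000000 in
lemma bdry (n : ℕ) (hn : 1 ≤ n) : L n n + L n (n + 1) + g n n = 0 := by
  have hx : (1 : ℚ) ≤ (n : ℚ) := by exact_mod_cast hn
  have hA : harm (n + 1 + n) = harm (n + n) + 1 / ((n : ℚ) + n + 1) := by
    have h : n + 1 + n = (n + n) + 1 := by omega
    rw [h, harm_succ]; push_cast; ring
  have hC : harm (n + 1 + (n + 1))
      = harm (n + n) + 1 / ((n : ℚ) + n + 1) + 1 / ((n : ℚ) + n + 2) := by
    have h : n + 1 + (n + 1) = ((n + n) + 1) + 1 := by omega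
    rw [h, harm_succ, harm_succ]; push_cast; ring
  have eC1 : ((n + 1 + n).choose n : ℚ)
      = ((n + n).choose n : ℚ) * (2 * (n : ℚ) + 1) / ((n : ℚ) + 1) := by
    have hidx : n + 1 + n = n + n + 1 := by omega
    rw [hidx]
    apply eq_div_of_mul_eq (by positivity)
    have h := chooseA (n + n) n (by omega)
    push_cast at h ⊢
    linear_combination h
  have eC2 : ((n + 1 + (n + 1)).choose (n + 1) : ℚ)
      = ((n + n).choose n : ℚ) * 2 * (2 * (n : ℚ) + 1) / ((n : ℚ) + 1) := by
    have hidx : n + 1 + (n + 1) = n + n + 1 + 1 := by omega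
    rw [hidx]
    apply eq_div_of_mul_eq (by positivity)
    have t1 := chooseC n n
    have t2 := chooseA (n + n + 1) (n + 1) (by omega)
    push_cast at t1 t2 ⊢
    linear_combination t2 + 2 * t1
  have z1 : n.choose (n + 1) = 0 := Nat.choose_eq_zero_of_lt (by omega)
  have z2 : (n - 1).choose n = 0 := Nat.choose_eq_zero_of_lt (by omega)
  have z3 : (n - 1).choose (n + 1) = 0 := Nat.choose_eq_zero_of_lt (by omega)
  simp only [L, s, g, f]
  rw [Nat.choose_succ_self_right n, Nat.choose_self n, Nat.choose_self (n + 1),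
      z1, z2, z3, eC1, eC2, hA, hC, Nat.sub_self n,
      show n + 1 - n = 1 from by omega, show n + 1 - (n + 1) = 0 from by omega,
      harm_zero, harm_one]
  push_cast
  rw [show (n : ℚ) - n + 1 = 1 from by ring]
  have d1 : (n : ℚ) + 1 ≠ 0 := by positivity
  have d2 : (n : ℚ) + n + 1 ≠ 0 := by positivity
  have d3 : (n : ℚ) + n + 2 ≠ 0 := by positivity
  have d4 : (n : ℚ) + n ≠ 0 := ne_of_gt (by linarith)
  field_simp
  ring

lemma f_zero_of_lt (n k : ℕ) (h : n < k) : f n k = 0 := by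
  simp [f, Nat.choose_eq_zero_of_lt h]

lemma s_zero_of_lt (n k : ℕ) (h : n < k) : s n k = 0 := by
  simp [s, f_zero_of_lt n k h]

lemma main (n : ℕ) (hn : 1 ≤ n) : ∑ k ∈ Finset.range (n + 2), L n k = 0 := by
  rw [Finset.sum_range_succ, Finset.sum_range_succ]
  have h1 : ∑ k ∈ Finset.range n, L n k = g n n - g n 0 := by
    rw [← Finset.sum_range_sub (g n) n]
    exact Finset.sum_congr rfl fun k hk => step n k (Finset.mem_range.1 hk)
  rw [h1, g_zero]
  have hb := bdry n hn
  linarith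

lemma sum_s (n j : ℕ) (hj : n + 1 ≤ j) :
    ∑ k ∈ Finset.range j, s n k = ∑ k ∈ Finset.range (n + 1), s n k := by
  apply (Finset.sum_subset (Finset.range_subset_range.2 hj) ?_).symm
  intro x _ hnx
  exact s_zero_of_lt n x (by simp only [Finset.mem_range] at hnx; omega)

lemma sum_f (n j : ℕ) (hj : n + 1 ≤ j) :
    ∑ k ∈ Finset.range j, f n k = ∑ k ∈ Finset.range (n + 1), f n k := by
  apply (Finset.sum_subset (Finset.range_subset_range.2 hj) ?_).symm
  intro x _ hnx
  exact f_zero_of_lt n x (by simp only [Finset.mem_range] at hnx; omega)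

lemma apery'_eq (n j : ℕ) (hj : n + 1 ≤ j) :
    apery' n = 2 * ∑ k ∈ Finset.range j, s n k := by
  rw [sum_s n j hj]; rfl

lemma apery_eq (n j : ℕ) (hj : n + 1 ≤ j) :
    apery n = ∑ k ∈ Finset.range j, f n k := by
  rw [sum_f n j hj]; rfl

end AperyAux

open AperyAux

theorem apery'_recurrence :
    apery' 0 = 0 ∧
      ∀ n : ℕ, 1 ≤ n →
        ((n : ℚ) + 1) ^ 3 * apery' (n + 1) =
          (2 * (n : ℚ) + 1) * (17 * (n : ℚ) ^ 2 + 17 * n + 5) * apery' n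
            - (n : ℚ) ^ 3 * apery' (n - 1)
            - 3 * ((n : ℚ) + 1) ^ 2 * apery (n + 1)
            + (102 * (n : ℚ) ^ 2 + 102 * n + 27) * apery n
            - 3 * (n : ℚ) ^ 2 * apery (n - 1) := by
  constructor
  · simp [apery', harm]
  · intro n hn
    obtain ⟨m, rfl⟩ : ∃ m, n = m + 1 := ⟨n - 1, by omega⟩
    have hmain := main (m + 1) (by omega)
    have e1 : apery' (m + 1 + 1) = 2 * ∑ k ∈ Finset.range (m + 3), s (m + 1 + 1) k :=
      apery'_eq _ _ (by omega)
    have e2 : apery' (m + 1) = 2 * ∑ k ∈ Finset.range (m + 3), s (m + 1) k :=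
      apery'_eq _ _ (by omega)
    have e3 : apery' (m + 1 - 1) = 2 * ∑ k ∈ Finset.range (m + 3), s (m + 1 - 1) k :=
      apery'_eq _ _ (by omega)
    have e4 : apery (m + 1 + 1) = ∑ k ∈ Finset.range (m + 3), f (m + 1 + 1) k :=
      apery_eq _ _ (by omega)
    have e5 : apery (m + 1) = ∑ k ∈ Finset.range (m + 3), f (m + 1) k :=
      apery_eq _ _ (by omega)
    have e6 : apery (m + 1 - 1) = ∑ k ∈ Finset.range (m + 3), f (m + 1 - 1) k :=
      apery_eq _ _ (by omega)
    have hL : ∑ k ∈ Finset.range (m + 3), L (m + 1) k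
        = (((m + 1 : ℕ) : ℚ) + 1) ^ 3 * (2 * ∑ k ∈ Finset.range (m + 3), s (m + 1 + 1) k)
          - (2 * ((m + 1 : ℕ) : ℚ) + 1) * (17 * ((m + 1 : ℕ) : ℚ) ^ 2 + 17 * ((m + 1 : ℕ) : ℚ) + 5)
            * (2 * ∑ k ∈ Finset.range (m + 3), s (m + 1) k)
          + ((m + 1 : ℕ) : ℚ) ^ 3 * (2 * ∑ k ∈ Finset.range (m + 3), s (m + 1 - 1) k)
          + 3 * (((m + 1 : ℕ) : ℚ) + 1) ^ 2 * ∑ k ∈ Finset.range (m + 3), f (m + 1 + 1) k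
          - (102 * ((m + 1 : ℕ) : ℚ) ^ 2 + 102 * ((m + 1 : ℕ) : ℚ) + 27)
            * ∑ k ∈ Finset.range (m + 3), f (m + 1) k
          + 3 * ((m + 1 : ℕ) : ℚ) ^ 2 * ∑ k ∈ Finset.range (m + 3), f (m + 1 - 1) k := by
      simp only [Finset.mul_sum, ← Finset.sum_sub_distrib, ← Finset.sum_add_distrib]
      exact Finset.sum_congr rfl fun k _ => by simp only [L]; try ring
    rw [e1, e2, e3, e4, e5, e6]
    linarith [hmain, hL]
end
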